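/- Let (x₁,…,x₅) ∈ ℂ⁵ satisfy x₁+⋯+x₅ = 0, x₁²+⋯+x₅² = 0 and x₁³+⋯+x₅³ = 0, with all xᵢ ≠ 0, x₁+x₂ ≠ 0 and x₁²+x₂² ≠ 0. Let t = Σ_{i=1}^{5} (ρⁱ·T) + Σ_{i=1}^{5} ((κρⁱ)·T), where T(x₁,…,x₅) = x₁x₂x₃x₄/x₅⁴, ρ = (1 2 3 4 5), κ = (1 2), and (σ·T)(x₁,…,x₅) = T(x_{σ(1)},…,x_{σ(5)}). Set v = x₂/x₁. Then t = −2g(v)/(v⁴(1+v)⁴(1+v²)⁴), where g(v) = 1 + 5v + 15v² + 35v³ + 65v⁴ + 101v⁵ + 135v⁶ + 155v⁷ + 165v⁸ + 165v⁹ + 161v¹⁰ + 165v¹¹ + 165v¹² + 155v¹³ + 135v¹⁴ + 101v¹⁵ + 65v¹⁶ + 35v¹⁷ + 15v¹⁸ + 5v¹⁹ + v²⁰. -/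

import Mathlib

open Finset

/-- `T(x₁,…,x₅) = x₁x₂x₃x₄ / x₅⁴` (zero-indexed). -/
noncomputable def bringT (x : Fin 5 → ℂ) : ℂ :=
  x 0 * x 1 * x 2 * x 3 / (x 4) ^ 4

/-- The 5-cycle `ρ = (1 2 3 4 5)`. -/
def bringRho : Equiv.Perm (Fin 5) := finRotate 5

/-- The transposition `κ = (1 2)`. -/
def bringKappa : Equiv.Perm (Fin 5) := Equiv.swap 0 1

/-- `t = Σ_{i=1}^{5} (ρⁱ·T) + Σ_{i=1}^{5} ((κρⁱ)·T)`, where `(σ·T)(x) = T(x ∘ σ)`. -/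
noncomputable def bringt (x : Fin 5 → ℂ) : ℂ :=
  (∑ i ∈ Icc 1 5, bringT (x ∘ ⇑(bringRho ^ i))) +
  (∑ i ∈ Icc 1 5, bringT (x ∘ ⇑(bringKappa * bringRho ^ i)))

/-!
On Bring's curve Newton's identities give `e₁ = e₂ = e₃ = 0`, so the coordinates are the roots
of a Bring–Jerrard quintic `z⁵ - P z + Q`; solving for the last three coordinates expresses
`P = a⁴ + a³b + a²b² + ab³ + b⁴` and `Q = a b (a + b)(a² + b²)` in `a = x₁`, `b = x₂`.
The ten terms of `t` pair up to `2 Σᵢ (∏_{j ≠ i} xⱼ) / xᵢ⁴ = 2 e₄(x⁵) / e₅⁴`, and substituting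
`xⱼ⁵ = P xⱼ - Q` gives `e₄(x⁵) = 5 Q⁴ - P⁵` and `e₅ = -Q`. Dehomogenising with `b = v a` turns
`P` and `Q` into `a⁴ Φ₅(v)` and `a⁵ v (1 + v)(1 + v²)`, and `g = Φ₅(v)⁵ - 5 (v (1 + v)(1 + v²))⁴`.
-/

namespace BringCurve

variable {K : Type*} [Field K]

structure IsPoint (a b c d e : K) : Prop where
  sum_eq_zero : a + b + c + d + e = 0
  sum_sq_eq_zero : a ^ 2 + b ^ 2 + c ^ 2 + d ^ 2 + e ^ 2 = 0
  sum_cube_eq_zero : a ^ 3 + b ^ 3 + c ^ 3 + d ^ 3 + e ^ 3 = 0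

/-- The coordinates of a point of Bring's curve are the roots of
`z⁵ - jerrardP a b * z + jerrardQ a b`, by `IsPoint.prod_sub_eq`. -/
def jerrardP (a b : K) : K := a ^ 4 + a ^ 3 * b + a ^ 2 * b ^ 2 + a * b ^ 3 + b ^ 4

def jerrardQ (a b : K) : K := a * b * (a + b) * (a ^ 2 + b ^ 2)

theorem sum_cofactor_div_pow_four {a b c d e : K} (ha : a ≠ 0) (hb : b ≠ 0) (hc : c ≠ 0)
    (hd : d ≠ 0) (he : e ≠ 0) :
    b * c * d * e / a ^ 4 + a * c * d * e / b ^ 4 + a * b * d * e / c ^ 4 + a * b * c * e / d ^ 4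
      + a * b * c * d / e ^ 4
      = (b ^ 5 * c ^ 5 * d ^ 5 * e ^ 5 + a ^ 5 * c ^ 5 * d ^ 5 * e ^ 5
          + a ^ 5 * b ^ 5 * d ^ 5 * e ^ 5 + a ^ 5 * b ^ 5 * c ^ 5 * e ^ 5
          + a ^ 5 * b ^ 5 * c ^ 5 * d ^ 5) / (a * b * c * d * e) ^ 4 := by
  field_simp

namespace IsPoint

variable [CharZero K] {a b c d e : K}

/-- Newton's identities, solved for the elementary symmetric functions of `c, d, e`. -/
theorem cubic (h : IsPoint a b c d e) :
    c + d + e = -(a + b) ∧ c * d + c * e + d * e = a ^ 2 + a * b + b ^ 2 ∧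
      c * d * e = -((a + b) * (a ^ 2 + b ^ 2)) := by
  have hs : c + d + e = -(a + b) := by linear_combination h.sum_eq_zero
  have hp : c * d + c * e + d * e = a ^ 2 + a * b + b ^ 2 := by
    linear_combination ((c + d + e - a - b) / 2) * h.sum_eq_zero - h.sum_sq_eq_zero / 2
  refine ⟨hs, hp, ?_⟩
  linear_combination h.sum_cube_eq_zero / 3
    + (-((c + d + e) ^ 2 - (a + b) * (c + d + e) + (a + b) ^ 2) / 3 + (a ^ 2 + a * b + b ^ 2)) * hs
    + (c + d + e) * hp

theorem prod_sub_eq (h : IsPoint a b c d e) (z : K) :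
    (z - a) * (z - b) * (z - c) * (z - d) * (z - e) = z ^ 5 - jerrardP a b * z + jerrardQ a b := by
  obtain ⟨hs, hp, hq⟩ := h.cubic
  unfold jerrardP jerrardQ
  linear_combination (-z ^ 2 * (z - a) * (z - b)) * hs + (z * (z - a) * (z - b)) * hp
    - ((z - a) * (z - b)) * hq

theorem pow_five_eq (h : IsPoint a b c d e) {z : K}
    (hz : z = a ∨ z = b ∨ z = c ∨ z = d ∨ z = e) :
    z ^ 5 = jerrardP a b * z - jerrardQ a b := by
  have hroot := h.prod_sub_eq z
  rcases hz with rfl | rfl | rfl | rfl | rfl <;> linear_combination -hroot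

theorem mul_eq_neg_jerrardQ (h : IsPoint a b c d e) : a * b * c * d * e = -jerrardQ a b := by
  linear_combination -h.prod_sub_eq 0

theorem sum_prod_pow_five (h : IsPoint a b c d e) :
    b ^ 5 * c ^ 5 * d ^ 5 * e ^ 5 + a ^ 5 * c ^ 5 * d ^ 5 * e ^ 5 + a ^ 5 * b ^ 5 * d ^ 5 * e ^ 5
      + a ^ 5 * b ^ 5 * c ^ 5 * e ^ 5 + a ^ 5 * b ^ 5 * c ^ 5 * d ^ 5
      = 5 * jerrardQ a b ^ 4 - jerrardP a b ^ 5 := by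
  have hpow (z : K) (hz : z = a ∨ z = b ∨ z = c ∨ z = d ∨ z = e) := h.pow_five_eq hz
  rw [hpow a (by simp), hpow b (by simp), hpow c (by simp), hpow d (by simp), hpow e (by simp)]
  obtain ⟨hs, hp, hq⟩ := h.cubic
  set P := jerrardP a b with hP
  set Q := jerrardQ a b
  unfold jerrardP at hP
  -- `Σᵢ ∏_{j ≠ i} (Q - P xⱼ) = 5Q⁴ - 4Q³P e₁ + 3Q²P² e₂ - 2QP³ e₃ + P⁴ e₄`, with `e₄ = -P`
  linear_combination (-4 * Q ^ 3 * P + 3 * Q ^ 2 * P ^ 2 * (a + b) - 2 * Q * P ^ 3 * (a * b)) * hs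
    + (3 * Q ^ 2 * P ^ 2 - 2 * Q * P ^ 3 * (a + b) + P ^ 4 * (a * b)) * hp
    + (-2 * Q * P ^ 3 + P ^ 4 * (a + b)) * hq + P ^ 4 * hP

end IsPoint

end BringCurve

theorem bringt_eq_two_mul_sum (x : Fin 5 → ℂ) :
    bringt x = 2 * (x 1 * x 2 * x 3 * x 4 / x 0 ^ 4 + x 0 * x 2 * x 3 * x 4 / x 1 ^ 4
      + x 0 * x 1 * x 3 * x 4 / x 2 ^ 4 + x 0 * x 1 * x 2 * x 4 / x 3 ^ 4
      + x 0 * x 1 * x 2 * x 3 / x 4 ^ 4) := by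
  rw [bringt, show Icc 1 5 = ({1, 2, 3, 4, 5} : Finset ℕ) from rfl]
  simp only [bringT, bringRho, Fin.isValue, Function.comp_apply, pow_succ, pow_zero, one_mul,
    mem_insert, OfNat.one_ne_ofNat, mem_singleton, or_self, not_false_eq_true, sum_insert,
    finRotate_apply, zero_add, Fin.reduceAdd, Nat.reduceEqDiff, Equiv.Perm.mul_apply, sum_singleton,
    bringKappa, Equiv.Perm.coe_mul, Equiv.swap_apply_right, ne_eq, Fin.reduceEq,
    Equiv.swap_apply_of_ne_of_ne, Equiv.swap_apply_left]
  ring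

open BringCurve in
/-- on Bring's curve, `t` is the explicit rational function
`−2g(v)/(v⁴(1+v)⁴(1+v²)⁴)` of `v = x₂/x₁`. -/
theorem bringt_eq_rational_function_of_v (x : Fin 5 → ℂ)
    (h1 : x 0 + x 1 + x 2 + x 3 + x 4 = 0)
    (h2 : x 0 ^ 2 + x 1 ^ 2 + x 2 ^ 2 + x 3 ^ 2 + x 4 ^ 2 = 0)
    (h3 : x 0 ^ 3 + x 1 ^ 3 + x 2 ^ 3 + x 3 ^ 3 + x 4 ^ 3 = 0)
    (hx : ∀ i, x i ≠ 0)
    (h12 : x 0 + x 1 ≠ 0)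
    (h12sq : x 0 ^ 2 + x 1 ^ 2 ≠ 0) :
    let v : ℂ := x 1 / x 0
    let g : ℂ := 1 + 5 * v + 15 * v ^ 2 + 35 * v ^ 3 + 65 * v ^ 4 + 101 * v ^ 5
      + 135 * v ^ 6 + 155 * v ^ 7 + 165 * v ^ 8 + 165 * v ^ 9 + 161 * v ^ 10
      + 165 * v ^ 11 + 165 * v ^ 12 + 155 * v ^ 13 + 135 * v ^ 14 + 101 * v ^ 15
      + 65 * v ^ 16 + 35 * v ^ 17 + 15 * v ^ 18 + 5 * v ^ 19 + v ^ 20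
    bringt x = -2 * g / (v ^ 4 * (1 + v) ^ 4 * (1 + v ^ 2) ^ 4) := by
  intro v g
  have hB : IsPoint (x 0) (x 1) (x 2) (x 3) (x 4) := ⟨h1, h2, h3⟩
  have hg : g = (1 + v + v ^ 2 + v ^ 3 + v ^ 4) ^ 5 - 5 * (v * (1 + v) * (1 + v ^ 2)) ^ 4 := by
    simp only [g]; ring
  have hP : jerrardP (x 0) (x 1) = x 0 ^ 4 * (1 + v + v ^ 2 + v ^ 3 + v ^ 4) := by
    simp only [jerrardP, v]; field_simp [hx 0]
  have hQ : jerrardQ (x 0) (x 1) = x 0 ^ 5 * (v * (1 + v) * (1 + v ^ 2)) := by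
    simp only [jerrardQ, v]; field_simp [hx 0]
  have hQ0 : jerrardQ (x 0) (x 1) ≠ 0 := by simp [jerrardQ, hx, h12, h12sq]
  obtain ⟨hx0, ⟨hv, hv1⟩, hv2⟩ : x 0 ≠ 0 ∧ (v ≠ 0 ∧ 1 + v ≠ 0) ∧ 1 + v ^ 2 ≠ 0 := by
    simpa [hQ] using hQ0
  rw [bringt_eq_two_mul_sum, sum_cofactor_div_pow_four (hx 0) (hx 1) (hx 2) (hx 3) (hx 4),
    hB.sum_prod_pow_five, hB.mul_eq_neg_jerrardQ, hP, hQ, hg]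
  field_simp
  ring
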